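/- Let H be a complex Hilbert space and t, s densely defined closed operators on H. Then their adjoints t*, s* are densely defined closed operators and ‖P_{G(t*)} − P_{G(s*)}‖ = ‖P_{G(t)} − P_{G(s)}‖; that is, taking adjoints is an isometry for the gap metric. -/

import Mathlib

/-- The graph of a densely defined (partial) operator `t` on a Hilbert space `K`, viewed
as a submodule of the Hilbert space `K ⊕ K` (the `ℓ²`-direct sum `WithLp 2 (K × K)`). -/
noncomputable def pmapGraph {K : Type*} [NormedAddCommGroup K] [InnerProductSpace ℂ K]
    (t : K →ₗ.[ℂ] K) : Submodule ℂ (WithLp 2 (K × K)) :=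
  t.graph.comap (WithLp.linearEquiv 2 ℂ (K × K)).toLinearMap

/-- `P` is the orthogonal projection of the Hilbert space `E` onto the subspace `G`:
it is the (unique) selfadjoint idempotent bounded operator with range `G`. -/
def IsOrthogonalProjectionOnto {E : Type*} [NormedAddCommGroup E] [InnerProductSpace ℂ E]
    [CompleteSpace E] (P : E →L[ℂ] E) (G : Submodule ℂ E) : Prop :=
  IsSelfAdjoint P ∧ IsIdempotentElem P ∧ LinearMap.range (P : E →ₗ[ℂ] E) = G

/-!
With the unitary `J (x, y) = (y, -x)` of `H ⊕ H`, the graph of `t*` is `(J G(t))ᗮ` for every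
densely defined `t`. Hence `P_{G(t*)} = 1 - J P_{G(t)} J⁻¹`, so `P_{G(t*)} - P_{G(s*)}` is the
conjugate of `P_{G(s)} - P_{G(t)}` by `J` and has the same norm. The same identity gives the
density of `Dom(t*)` for closed `t`: a vector `z ⊥ Dom(t*)` yields `(z, 0) ⊥ G(t*)`, so
`(z, 0) ∈ J G(t)` because `G(t)` is closed, and this forces `z = 0`.
-/

open LinearPMap Submodule LinearIsometryEquiv

namespace Submodule

variable {𝕜 E E' : Type*} [RCLike 𝕜] [NormedAddCommGroup E] [InnerProductSpace 𝕜 E]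
  [NormedAddCommGroup E'] [InnerProductSpace 𝕜 E']

theorem starProjection_map (e : E ≃ₗᵢ[𝕜] E') (U : Submodule 𝕜 E) [U.HasOrthogonalProjection] :
    (U.map (e.toLinearEquiv : E →ₗ[𝕜] E')).starProjection =
      (e : E →L[𝕜] E') ∘L U.starProjection ∘L (e.symm : E' →L[𝕜] E) := by
  ext x
  exact starProjection_map_apply e U x

theorem norm_starProjection_map_sub (e : E ≃ₗᵢ[𝕜] E') (U V : Submodule 𝕜 E)
    [U.HasOrthogonalProjection] [V.HasOrthogonalProjection] :
    ‖(U.map (e.toLinearEquiv : E →ₗ[𝕜] E')).starProjection -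
      (V.map (e.toLinearEquiv : E →ₗ[𝕜] E')).starProjection‖ =
      ‖U.starProjection - V.starProjection‖ := by
  rw [starProjection_map, starProjection_map, ← ContinuousLinearMap.comp_sub,
    ← ContinuousLinearMap.sub_comp, ← ContinuousLinearMap.comp_assoc,
    ContinuousLinearMap.opNorm_comp_linearIsometryEquiv]
  exact e.toLinearIsometry.norm_toContinuousLinearMap_comp

theorem norm_starProjection_orthogonal_sub (U V : Submodule 𝕜 E)
    [U.HasOrthogonalProjection] [V.HasOrthogonalProjection] :
    ‖Uᗮ.starProjection - Vᗮ.starProjection‖ = ‖U.starProjection - V.starProjection‖ := by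
  rw [starProjection_orthogonal', starProjection_orthogonal', sub_sub_sub_cancel_left,
    norm_sub_rev]

end Submodule

theorem IsOrthogonalProjectionOnto.eq_starProjection {E : Type*} [NormedAddCommGroup E]
    [InnerProductSpace ℂ E] [CompleteSpace E] {P : E →L[ℂ] E} {G : Submodule ℂ E}
    [G.HasOrthogonalProjection] (hP : IsOrthogonalProjectionOnto P G) :
    P = G.starProjection :=
  ContinuousLinearMap.IsStarProjection.ext ⟨hP.2.1, hP.1⟩ isStarProjection_starProjection
    (by rw [hP.2.2, range_starProjection])

namespace LinearIsometryEquiv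

variable (p : ENNReal) [Fact (1 ≤ p)] (𝕜 E F : Type*) [Semiring 𝕜] [SeminormedAddCommGroup E]
  [Module 𝕜 E] [SeminormedAddCommGroup F] [Module 𝕜 F]

noncomputable def withLpProdSkewSwap : WithLp p (E × F) ≃ₗᵢ[𝕜] WithLp p (F × E) :=
  (withLpProdCongr p (LinearIsometryEquiv.neg 𝕜) (refl 𝕜 F)).trans (withLpProdComm p 𝕜 E F)

@[simp]
theorem withLpProdSkewSwap_apply (x : WithLp p (E × F)) :
    withLpProdSkewSwap p 𝕜 E F x = WithLp.toLp p (x.snd, -x.fst) :=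
  rfl

end LinearIsometryEquiv

section Graph

variable {K : Type*} [NormedAddCommGroup K] [InnerProductSpace ℂ K]

theorem isClosed_pmapGraph {t : K →ₗ.[ℂ] K} (hc : IsClosed (t.graph : Set (K × K))) :
    IsClosed (pmapGraph t : Set (WithLp 2 (K × K))) :=
  hc.preimage (WithLp.prod_continuous_ofLp 2 K K)

variable [CompleteSpace K]

theorem hasOrthogonalProjection_pmapGraph {t : K →ₗ.[ℂ] K}
    (hc : IsClosed (t.graph : Set (K × K))) : (pmapGraph t).HasOrthogonalProjection :=
  have := (isClosed_pmapGraph hc).completeSpace_coe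
  inferInstance

theorem pmapGraph_adjoint {t : K →ₗ.[ℂ] K} (ht : Dense (t.domain : Set K)) :
    pmapGraph t† =
      ((pmapGraph t).map ((withLpProdSkewSwap 2 ℂ K K).toLinearEquiv :
        WithLp 2 (K × K) →ₗ[ℂ] WithLp 2 (K × K)))ᗮ := by
  rw [pmapGraph, pmapGraph, adjoint_graph_eq_graph_adjoint ht, Submodule.adjoint,
    comap_map_eq_of_injective (WithLp.linearEquiv 2 ℂ (K × K)).injective,
    comap_equiv_eq_map_symm, ← map_comp]
  rfl

theorem dense_adjoint_domain {t : K →ₗ.[ℂ] K} (hd : Dense (t.domain : Set K))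
    (hc : IsClosed (t.graph : Set (K × K))) : Dense (t†.domain : Set K) := by
  suffices (t†.domain)ᗮ = ⊥ by
    rw [dense_iff_topologicalClosure_eq_top, ← orthogonal_orthogonal_eq_closure, this,
      bot_orthogonal_eq_top]
  refine eq_bot_iff.mpr fun z hz => ?_
  have hperp : WithLp.toLp 2 (z, 0) ∈ (pmapGraph t†)ᗮ := by
    intro u hu
    obtain ⟨y, hy, -⟩ := (mem_graph_iff _).mp hu
    have hyu : (y : K) = u.fst := hy
    simpa [WithLp.prod_inner_apply, ← hyu] using hz _ y.2
  have := hasOrthogonalProjection_pmapGraph hc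
  rw [pmapGraph_adjoint hd, orthogonal_orthogonal] at hperp
  obtain ⟨q, hq, hqz⟩ := hperp
  have hfst : q.fst = 0 := by simpa using congrArg (·.snd) hqz
  have hsnd : z = q.snd := by simpa using (congrArg (·.fst) hqz).symm
  exact hsnd.trans (t.graph_fst_eq_zero_snd hq hfst)

end Graph

/-- Let `t, s` be densely defined closed operators on a complex Hilbert space `H`. Then
their adjoints `t*, s*` are densely defined closed operators and
`‖P_{G(t*)} − P_{G(s*)}‖ = ‖P_{G(t)} − P_{G(s)}‖`: taking adjoints is an isometry for
the gap metric. -/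
theorem stmt_15 {H : Type*} [NormedAddCommGroup H] [InnerProductSpace ℂ H] [CompleteSpace H]
    (t s : H →ₗ.[ℂ] H)
    (hdt : Dense (t.domain : Set H)) (hct : IsClosed (t.graph : Set (H × H)))
    (hds : Dense (s.domain : Set H)) (hcs : IsClosed (s.graph : Set (H × H))) :
    Dense (t.adjoint.domain : Set H) ∧ IsClosed (t.adjoint.graph : Set (H × H)) ∧
    Dense (s.adjoint.domain : Set H) ∧ IsClosed (s.adjoint.graph : Set (H × H)) ∧
    ∀ Pt Ps Pt' Ps' : WithLp 2 (H × H) →L[ℂ] WithLp 2 (H × H),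
      IsOrthogonalProjectionOnto Pt (pmapGraph t) →
      IsOrthogonalProjectionOnto Ps (pmapGraph s) →
      IsOrthogonalProjectionOnto Pt' (pmapGraph t.adjoint) →
      IsOrthogonalProjectionOnto Ps' (pmapGraph s.adjoint) →
      ‖Pt' - Ps'‖ = ‖Pt - Ps‖ := by
  refine ⟨dense_adjoint_domain hdt hct, adjoint_isClosed hdt,
    dense_adjoint_domain hds hcs, adjoint_isClosed hds, ?_⟩
  intro Pt Ps Pt' Ps' hPt hPs hPt' hPs'
  have := hasOrthogonalProjection_pmapGraph hct
  have := hasOrthogonalProjection_pmapGraph hcs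
  rw [pmapGraph_adjoint hdt] at hPt'
  rw [pmapGraph_adjoint hds] at hPs'
  rw [hPt.eq_starProjection, hPs.eq_starProjection, hPt'.eq_starProjection,
    hPs'.eq_starProjection, norm_starProjection_orthogonal_sub, norm_starProjection_map_sub]
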